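/- Let m, n, r be positive integers with r < min{m, n}, and let X = U diag(σ₁, …, σ_{r̲}, 0, …, 0) Vᵀ with r̲ = rank X ≥ 1, U ∈ ℝ^{m×(r+1)}, V ∈ ℝ^{n×(r+1)} having orthonormal columns, and σ₁ ≥ … ≥ σ_{r̲} > 0. Fix t₀ > 0 and set Z := (σ_{r̲}/t₀) U diag(0_{(r̲−1)×(r̲−1)}, [[−1, 1/2], [1/2, 0]], (3/4) I_{r−r̲}) Vᵀ. Then for every t > 0 with τ := t/t₀ ∈ (12/17, 1) ∪ (1, 4/3), the matrix X + t Z has rank r + 1 and its nonzero singular values are σ₁, …, σ_{r̲−1}, the value (3/4) τ σ_{r̲} with multiplicity r − r̲, and the two values σ_{r̲} λ₊(τ) and −σ_{r̲} λ₋(τ), where λ_±(τ) = (1 − τ ± √((1 − τ)² + τ²))/2. -/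

import Mathlib

/-!
The middle factor `diag σ + τ σ_k D` of `X + t Z = U (diag σ + τ σ_k D) Vᵀ` is diagonal except for
the symmetric block `σ_k [[1 - τ, τ/2], [τ/2, 0]]` in the plane of the indices `k - 1, k`. That
block has eigenvalues `σ_k λ₊(τ) > 0 > σ_k λ₋(τ)` with orthonormal eigenvectors
`(λ₊, τ/2), (-τ/2, λ₊)` (up to normalisation), so a rotation `R` of this plane diagonalises it;
flipping the sign of the second column of `R` on the right turns the eigendecomposition into a
singular value decomposition with positive diagonal. Multiplying the rotations into `U` and `V`
keeps their columns orthonormal, which gives the SVD of `X + t Z`, and the rank is read off it.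
-/

open Filter Topology Matrix

/-- `λ₊(τ) = (1 - τ + √((1 - τ)² + τ²)) / 2`. -/
noncomputable def lamP (τ : ℝ) : ℝ := (1 - τ + Real.sqrt ((1 - τ) ^ 2 + τ ^ 2)) / 2

/-- `λ₋(τ) = (1 - τ - √((1 - τ)² + τ²)) / 2`. -/
noncomputable def lamM (τ : ℝ) : ℝ := (1 - τ - Real.sqrt ((1 - τ) ^ 2 + τ ^ 2)) / 2

/-- The `(r+1) × (r+1)` block-diagonal matrix
`diag(0_{(k−1)×(k−1)}, [[−1, 1/2], [1/2, 0]], (3/4) I_{r−k})`. -/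
noncomputable def blockD (r k : ℕ) : Matrix (Fin (r + 1)) (Fin (r + 1)) ℝ :=
  Matrix.of fun i j : Fin (r + 1) =>
    if (i : ℕ) = k - 1 ∧ (j : ℕ) = k - 1 then -1
    else if ((i : ℕ) = k - 1 ∧ (j : ℕ) = k) ∨ ((i : ℕ) = k ∧ (j : ℕ) = k - 1) then 1 / 2
    else if (i : ℕ) = (j : ℕ) ∧ k + 1 ≤ (i : ℕ) then 3 / 4
    else 0

namespace Matrix

variable {ι R : Type*} [Fintype ι] [DecidableEq ι] [Semiring R]

theorem diagonal_mul_single (d : ι → R) (i j : ι) (c : R) :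
    diagonal d * single i j c = single i j (d i * c) := by
  ext x y
  rw [diagonal_mul, single_apply, single_apply]
  split_ifs with h <;> simp [h]

theorem single_mul_diagonal (d : ι → R) (i j : ι) (c : R) :
    single i j c * diagonal d = single i j (c * d j) := by
  ext x y
  rw [mul_diagonal, single_apply, single_apply]
  split_ifs with h <;> simp [h]

end Matrix

section PlaneEmbed

variable {ι R : Type*} [DecidableEq ι] [Semiring R]

/-- The matrix acting as `p` on the plane spanned by the basis vectors `a, b` and as `diagonal d`
on the remaining coordinates (the values `d a`, `d b` are ignored). -/
def planeEmbed (a b : ι) (d : ι → R) (p : Matrix (Fin 2) (Fin 2) R) : Matrix ι ι R :=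
  diagonal (fun i => if i = a ∨ i = b then 0 else d i) +
    single a a (p 0 0) + single a b (p 0 1) + single b a (p 1 0) + single b b (p 1 1)

theorem diagonal_eq_planeEmbed {a b : ι} (hab : a ≠ b) (d : ι → R) :
    diagonal d = planeEmbed a b d !![d a, 0; 0, d b] := by
  have hd : d = (fun i => if i = a ∨ i = b then 0 else d i) + Pi.single a (d a) +
      Pi.single b (d b) := by
    funext i
    by_cases hia : i = a
    · subst hia; simp [hab]
    · by_cases hib : i = b
      · subst hib; simp [hia]
      · simp [hia, hib]
  conv_lhs => rw [hd]
  simp only [planeEmbed, of_apply, cons_val', cons_val_zero, cons_val_one, empty_val',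
    cons_val_fin_one, single_zero, add_zero, ← diagonal_single, diagonal_add]
  rfl

theorem planeEmbed_one {a b : ι} (hab : a ≠ b) :
    planeEmbed a b 1 (1 : Matrix (Fin 2) (Fin 2) R) = 1 := by
  conv_rhs => rw [← diagonal_one, diagonal_eq_planeEmbed hab]
  rw [one_fin_two]
  rfl

theorem planeEmbed_transpose (a b : ι) (d : ι → R) (p : Matrix (Fin 2) (Fin 2) R) :
    (planeEmbed a b d p)ᵀ = planeEmbed a b d pᵀ := by
  simp only [planeEmbed, transpose_add, diagonal_transpose, transpose_single, transpose_apply]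
  abel

variable [Fintype ι]

theorem planeEmbed_mul {a b : ι} (hab : a ≠ b) (d e : ι → R) (p q : Matrix (Fin 2) (Fin 2) R) :
    planeEmbed a b d p * planeEmbed a b e q = planeEmbed a b (d * e) (p * q) := by
  simp only [planeEmbed, add_mul, mul_add, diagonal_mul_diagonal, single_mul_single_same,
    single_mul_single_of_ne _ _ _ _ hab, single_mul_single_of_ne _ _ _ _ hab.symm,
    diagonal_mul_single, single_mul_diagonal, mul_apply, Fin.sum_univ_two, single_add,
    Pi.mul_apply, mul_ite, ite_mul, mul_zero, zero_mul]
  simp +contextual [hab, hab.symm]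
  abel

theorem planeEmbed_transpose_mul_self {a b : ι} (hab : a ≠ b) {p : Matrix (Fin 2) (Fin 2) R}
    (hp : pᵀ * p = 1) : (planeEmbed a b 1 p)ᵀ * planeEmbed a b 1 p = 1 := by
  rw [planeEmbed_transpose, planeEmbed_mul hab, hp, mul_one, planeEmbed_one hab]

end PlaneEmbed

section OrthonormalColumns

variable {m n ι K : Type*} [Fintype m] [Fintype n] [Fintype ι] [DecidableEq ι]

theorem transpose_mul_self_mul_eq_one [CommSemiring K] {U : Matrix m ι K} {P : Matrix ι ι K}
    (hU : Uᵀ * U = 1) (hP : Pᵀ * P = 1) : (U * P)ᵀ * (U * P) = 1 := by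
  rw [transpose_mul, Matrix.mul_assoc, ← Matrix.mul_assoc Uᵀ, hU, Matrix.one_mul, hP]

theorem rank_mul_diagonal_mul_transpose [Field K] {U : Matrix m ι K} {V : Matrix n ι K}
    (hU : Uᵀ * U = 1) (hV : Vᵀ * V = 1) {s : ι → K} (hs : ∀ i, s i ≠ 0) :
    (U * diagonal s * Vᵀ).rank = Fintype.card ι := by
  classical
  have hdiag : diagonal s = Uᵀ * (U * diagonal s * Vᵀ) * V := by
    simp only [← Matrix.mul_assoc, hU, Matrix.one_mul]
    rw [Matrix.mul_assoc, hV, Matrix.mul_one]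
  apply le_antisymm
  · exact (rank_mul_le_left _ _).trans ((rank_mul_le_right _ _).trans (rank_le_card_width _))
  · calc Fintype.card ι = (diagonal s).rank := by
          rw [rank_diagonal, Fintype.card_congr (Equiv.subtypeUnivEquiv hs)]
      _ = (Uᵀ * (U * diagonal s * Vᵀ) * V).rank := congrArg rank hdiag
      _ ≤ (U * diagonal s * Vᵀ).rank := (rank_mul_le_left _ _).trans (rank_mul_le_right _ _)

end OrthonormalColumns

theorem lamP_add_lamM (τ : ℝ) : lamP τ + lamM τ = 1 - τ := by
  rw [lamP, lamM]; ring

theorem lamP_mul_lamM (τ : ℝ) : lamP τ * lamM τ = -(τ / 2) ^ 2 := by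
  have h := Real.sq_sqrt (by positivity : (0 : ℝ) ≤ (1 - τ) ^ 2 + τ ^ 2)
  rw [lamP, lamM]
  linear_combination (-1 / 4 : ℝ) * h

theorem lamP_pos (τ : ℝ) : 0 < lamP τ := by
  have h := Real.sq_sqrt (by positivity : (0 : ℝ) ≤ (1 - τ) ^ 2 + τ ^ 2)
  have h0 := Real.sqrt_nonneg ((1 - τ) ^ 2 + τ ^ 2)
  rw [lamP]
  nlinarith [sq_nonneg τ]

theorem lamM_neg {τ : ℝ} (hτ : τ ≠ 0) : lamM τ < 0 := by
  have h := lamP_mul_lamM τ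
  have := lamP_pos τ
  nlinarith [pow_pos (abs_pos.mpr hτ) 2, sq_abs τ]

noncomputable def eigenNorm (τ : ℝ) : ℝ := √(lamP τ ^ 2 + (τ / 2) ^ 2)

theorem eigenNorm_pos (τ : ℝ) : 0 < eigenNorm τ :=
  Real.sqrt_pos.mpr (by have := lamP_pos τ; positivity)

theorem eigenNorm_sq (τ : ℝ) : eigenNorm τ ^ 2 = lamP τ ^ 2 + (τ / 2) ^ 2 :=
  Real.sq_sqrt (by positivity)

/-- The rotation whose columns are the unit eigenvectors of `!![1 - τ, τ / 2; τ / 2, 0]`. -/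
noncomputable def eigenRot (τ : ℝ) : Matrix (Fin 2) (Fin 2) ℝ :=
  (eigenNorm τ)⁻¹ • !![lamP τ, -(τ / 2); τ / 2, lamP τ]

theorem eigenRot_transpose_mul_self (τ : ℝ) : (eigenRot τ)ᵀ * eigenRot τ = 1 := by
  have h := eigenNorm_sq τ
  have h0 := (eigenNorm_pos τ).ne'
  ext i j
  fin_cases i <;> fin_cases j <;> simp [eigenRot, mul_apply, Fin.sum_univ_two] <;> field_simp
  all_goals rw [h]; ring

theorem eigenRot_mul_diagonal_mul_transpose (τ : ℝ) :
    eigenRot τ * !![lamP τ, 0; 0, lamM τ] * (eigenRot τ)ᵀ = !![1 - τ, τ / 2; τ / 2, 0] := by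
  have h := eigenNorm_sq τ
  have h0 := (eigenNorm_pos τ).ne'
  have hs := lamP_add_lamM τ
  have hp := lamP_mul_lamM τ
  ext i j
  fin_cases i <;> fin_cases j <;> simp [eigenRot, mul_apply, Fin.sum_univ_two] <;> field_simp <;>
    rw [h]
  · linear_combination 4 * lamP τ * (lamP τ - lamM τ) * hs + 4 * (lamM τ - 1 + τ) * hp
  · linear_combination -τ * hp
  · linear_combination -τ * hp
  · linear_combination 4 * lamP τ * hp

theorem eigenRot_mul_flip_transpose_mul_self (τ : ℝ) :
    (eigenRot τ * !![1, 0; 0, -1])ᵀ * (eigenRot τ * !![1, 0; 0, -1]) = 1 :=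
  transpose_mul_self_mul_eq_one (eigenRot_transpose_mul_self τ)
    (by simp [← Matrix.ext_iff, Fin.forall_fin_two, mul_apply, Fin.sum_univ_two])

theorem smul_block_eq_eigenRot_svd (c τ : ℝ) :
    c • !![1 - τ, τ / 2; τ / 2, 0] =
      eigenRot τ * !![c * lamP τ, 0; 0, -(c * lamM τ)] * (eigenRot τ * !![1, 0; 0, -1])ᵀ := by
  have hflip : !![c * lamP τ, 0; 0, -(c * lamM τ)] * !![(1 : ℝ), 0; 0, -1]ᵀ =
      c • !![lamP τ, 0; 0, lamM τ] := by
    ext i j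
    fin_cases i <;> fin_cases j <;> simp [vecMul, dotProduct]
  rw [transpose_mul, ← Matrix.mul_assoc, Matrix.mul_assoc (eigenRot τ), hflip, Matrix.mul_smul,
    Matrix.smul_mul, eigenRot_mul_diagonal_mul_transpose]

noncomputable def svals (r k : ℕ) (σ : Fin (r + 1) → ℝ) (c τ : ℝ) : Fin (r + 1) → ℝ := fun i =>
  if (i : ℕ) < k - 1 then σ i
  else if (i : ℕ) = k - 1 then c * lamP τ
  else if (i : ℕ) = k then -(c * lamM τ)
  else 3 / 4 * τ * c

theorem svals_apply_of_val_eq_pred {r k : ℕ} {a : Fin (r + 1)} (ha : (a : ℕ) = k - 1)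
    (σ : Fin (r + 1) → ℝ) (c τ : ℝ) : svals r k σ c τ a = c * lamP τ := by
  simp only [svals, ha, lt_irrefl, if_false, if_true]

theorem svals_apply_of_val_eq {r k : ℕ} (hk1 : 1 ≤ k) {b : Fin (r + 1)} (hb : (b : ℕ) = k)
    (σ : Fin (r + 1) → ℝ) (c τ : ℝ) : svals r k σ c τ b = -(c * lamM τ) := by
  simp only [svals, hb, if_neg (show ¬k < k - 1 by omega), if_neg (show k ≠ k - 1 by omega),
    if_true]

theorem svals_pos {r k : ℕ} {σ : Fin (r + 1) → ℝ} (hσ : ∀ i : Fin (r + 1), (i : ℕ) < k → 0 < σ i)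
    {c τ : ℝ} (hc : 0 < c) (hτ : 0 < τ) (i : Fin (r + 1)) : 0 < svals r k σ c τ i := by
  simp only [svals]
  split_ifs
  · exact hσ i (by omega)
  · exact mul_pos hc (lamP_pos τ)
  · exact neg_pos.mpr (mul_neg_of_pos_of_neg hc (lamM_neg hτ.ne'))
  · positivity

theorem diagonal_add_smul_blockD_eq_planeEmbed {r k : ℕ} (hk1 : 1 ≤ k) {a b : Fin (r + 1)}
    (ha : (a : ℕ) = k - 1) (hb : (b : ℕ) = k) {σ : Fin (r + 1) → ℝ}
    (hσ : ∀ i : Fin (r + 1), k ≤ (i : ℕ) → σ i = 0) (τ : ℝ) :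
    diagonal σ + (τ * σ a) • blockD r k =
      planeEmbed a b (svals r k σ (σ a) τ) (σ a • !![1 - τ, τ / 2; τ / 2, 0]) := by
  ext i j
  simp only [planeEmbed, blockD, svals, Matrix.add_apply, Matrix.smul_apply, diagonal_apply,
    single_apply, of_apply, smul_eq_mul, Fin.ext_iff, ha, hb, cons_val', cons_val_zero,
    cons_val_one, empty_val', cons_val_fin_one]
  split_ifs <;>
    first
      | (exfalso; omega)
      | ring1
      | (rw [hσ i (by omega)]; ring1)
      | (rw [show σ i = σ a from congrArg σ (Fin.ext (by omega))]; ring1)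

theorem diagonal_add_smul_blockD_eq_svd {r k : ℕ} (hk1 : 1 ≤ k) {a b : Fin (r + 1)}
    (ha : (a : ℕ) = k - 1) (hb : (b : ℕ) = k) {σ : Fin (r + 1) → ℝ}
    (hσ : ∀ i : Fin (r + 1), k ≤ (i : ℕ) → σ i = 0) (τ : ℝ) :
    diagonal σ + (τ * σ a) • blockD r k =
      planeEmbed a b 1 (eigenRot τ) * diagonal (svals r k σ (σ a) τ) *
        (planeEmbed a b 1 (eigenRot τ * !![1, 0; 0, -1]))ᵀ := by
  have hab : a ≠ b := Fin.ne_of_val_ne (by omega)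
  rw [diagonal_add_smul_blockD_eq_planeEmbed hk1 ha hb hσ, diagonal_eq_planeEmbed hab,
    planeEmbed_transpose, planeEmbed_mul hab, planeEmbed_mul hab, one_mul, mul_one,
    svals_apply_of_val_eq_pred ha, svals_apply_of_val_eq hk1 hb, smul_block_eq_eigenRot_svd]

theorem map_svals {r k : ℕ} (hk1 : 1 ≤ k) (hkr : k ≤ r) (σ : Fin (r + 1) → ℝ) (c τ : ℝ) :
    Finset.univ.val.map (svals r k σ c τ) =
      (Finset.univ.filter (fun i : Fin (r + 1) => (i : ℕ) < k - 1)).val.map σ +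
      Multiset.replicate (r - k) (3 / 4 * τ * c) + {c * lamP τ, -(c * lamM τ)} := by
  let a : Fin (r + 1) := ⟨k - 1, by omega⟩
  let b : Fin (r + 1) := ⟨k, by omega⟩
  have hsplit : (Finset.univ : Finset (Fin (r + 1))).val =
      Finset.univ.val.filter (fun i : Fin (r + 1) => (i : ℕ) < k - 1) +
      Finset.univ.val.filter (fun i : Fin (r + 1) => k + 1 ≤ (i : ℕ)) + {a, b} := by
    ext i
    simp only [Multiset.count_add, Multiset.count_filter, Multiset.count_univ,
      Multiset.insert_eq_cons, Multiset.count_cons, Multiset.count_singleton, Fin.ext_iff, a, b]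
    split_ifs <;> omega
  have hlow : (Finset.univ.val.filter (fun i : Fin (r + 1) => (i : ℕ) < k - 1)).map
      (svals r k σ c τ) = (Finset.univ.val.filter (fun i : Fin (r + 1) => (i : ℕ) < k - 1)).map σ :=
    Multiset.map_congr rfl fun i hi => if_pos (Multiset.mem_filter.mp hi).2
  have hhigh : (Finset.univ.val.filter (fun i : Fin (r + 1) => k + 1 ≤ (i : ℕ))).map
      (svals r k σ c τ) = Multiset.replicate (r - k) (3 / 4 * τ * c) := by
    rw [Multiset.eq_replicate]
    constructor
    · rw [Multiset.card_map, ← Finset.filter_val, Finset.card_val]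
      have h := Finset.card_filter_add_card_filter_not (s := Finset.univ)
        (fun i : Fin (r + 1) => (i : ℕ) < k + 1)
      simp only [Fin.card_filter_val_lt, not_lt, Finset.card_univ, Fintype.card_fin] at h
      omega
    · simp only [Multiset.mem_map, Multiset.mem_filter]
      rintro _ ⟨i, ⟨-, hi⟩, rfl⟩
      simp only [svals]
      rw [if_neg (by omega), if_neg (by omega), if_neg (by omega)]
  rw [hsplit, Multiset.map_add, Multiset.map_add, hlow, hhigh, Finset.filter_val,
    Multiset.insert_eq_cons, Multiset.map_cons, Multiset.map_singleton,
    svals_apply_of_val_eq_pred (a := a) rfl, svals_apply_of_val_eq hk1 (b := b) rfl]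
  rfl

/-- for `t > 0` with `τ = t/t₀ ∈ (12/17, 1) ∪ (1, 4/3)`, the matrix `X + t Z`
has rank `r + 1` and its nonzero singular values (counted with multiplicity, i.e., there is
a reduced SVD `X + t Z = U' diag(s) V'ᵀ` with positive diagonal) are
`σ₁, …, σ_{k−1}`, the value `(3/4) τ σ_k` with multiplicity `r − k`, and the two values
`σ_k λ₊(τ)` and `−σ_k λ₋(τ)`. -/
theorem singular_values_of_X_plus_tZ
    (m n r k : ℕ) (hk1 : 1 ≤ k) (hkr : k ≤ r)
    (U : Matrix (Fin m) (Fin (r + 1)) ℝ) (V : Matrix (Fin n) (Fin (r + 1)) ℝ)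
    (hU : Uᵀ * U = 1) (hV : Vᵀ * V = 1)
    (σ : Fin (r + 1) → ℝ)
    (hσpos : ∀ i : Fin (r + 1), (i : ℕ) < k → 0 < σ i)
    (hσzero : ∀ i : Fin (r + 1), k ≤ (i : ℕ) → σ i = 0)
    (X : Matrix (Fin m) (Fin n) ℝ)
    (hX : X = U * Matrix.diagonal σ * Vᵀ)
    (t₀ : ℝ) (ht₀ : 0 < t₀)
    (Z : Matrix (Fin m) (Fin n) ℝ)
    (hZ : Z = (σ ⟨k - 1, by omega⟩ / t₀) • (U * blockD r k * Vᵀ))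
    (t : ℝ) (ht : 0 < t) :
    (X + t • Z).rank = r + 1 ∧
    ∃ (U' : Matrix (Fin m) (Fin (r + 1)) ℝ) (V' : Matrix (Fin n) (Fin (r + 1)) ℝ)
      (s : Fin (r + 1) → ℝ),
      U'ᵀ * U' = 1 ∧ V'ᵀ * V' = 1 ∧ (∀ i, 0 < s i) ∧
      X + t • Z = U' * Matrix.diagonal s * V'ᵀ ∧
      Finset.univ.val.map s =
        (Finset.univ.filter (fun i : Fin (r + 1) => (i : ℕ) < k - 1)).val.map σ +
        Multiset.replicate (r - k) (3 / 4 * (t / t₀) * σ ⟨k - 1, by omega⟩) +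
        {σ ⟨k - 1, by omega⟩ * lamP (t / t₀), -(σ ⟨k - 1, by omega⟩ * lamM (t / t₀))} := by
  set τ := t / t₀
  set a : Fin (r + 1) := ⟨k - 1, by omega⟩
  set b : Fin (r + 1) := ⟨k, by omega⟩
  have hab : a ≠ b := Fin.ne_of_val_ne (by simp only [a, b]; omega)
  set s := svals r k σ (σ a) τ
  set P := planeEmbed a b 1 (eigenRot τ)
  set Q := planeEmbed a b 1 (eigenRot τ * !![1, 0; 0, -1])
  have hUP : (U * P)ᵀ * (U * P) = 1 := transpose_mul_self_mul_eq_one hU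
    (planeEmbed_transpose_mul_self hab (eigenRot_transpose_mul_self τ))
  have hVQ : (V * Q)ᵀ * (V * Q) = 1 := transpose_mul_self_mul_eq_one hV
    (planeEmbed_transpose_mul_self hab (eigenRot_mul_flip_transpose_mul_self τ))
  have hs : ∀ i, 0 < s i := svals_pos hσpos (hσpos a (by simp only [a]; omega)) (div_pos ht ht₀)
  have hsvd : X + t • Z = U * P * diagonal s * (V * Q)ᵀ := by
    have hmiddle : X + t • Z = U * (diagonal σ + (τ * σ a) • blockD r k) * Vᵀ := by
      rw [hX, hZ, smul_smul, Matrix.mul_add, Matrix.add_mul, Matrix.mul_smul, Matrix.smul_mul]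
      congr 2
      simp only [τ]
      field_simp
    rw [hmiddle, diagonal_add_smul_blockD_eq_svd hk1 (b := b) rfl rfl hσzero]
    simp only [P, Q, s, transpose_mul, Matrix.mul_assoc]
  refine ⟨?_, U * P, V * Q, s, hUP, hVQ, hs, hsvd, map_svals hk1 hkr σ (σ a) τ⟩
  rw [hsvd, rank_mul_diagonal_mul_transpose hUP hVQ fun i => (hs i).ne', Fintype.card_fin]
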